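/- Let V be a finite set of n nodes, k ≤ n, and for each node i let λ_i : Fin n → ℝ be the ascending sorted list of RTTs from other nodes to i (with λ_i 0 = 0). Suppose a storage assignment f : V → Fin k is such that each node i and its k-1 nearest (least-RTT) neighbors hold all k distinct files. Then the latency of fetching file j at node i equals the RTT to the unique holder of file j among i and its k-1 nearest neighbors, and the average over all nodes i and files j of these latencies equals (1/(kn)) · Σ_i Σ_{m=0}^{k-1} λ_i(m). -/

import Mathlib

theorem stmt_8 (n k : ℕ) (hk : 0 < k) (hkn : k ≤ n)
    (τ : Fin n → Fin n → ℝ)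
    (σ : Fin n → Equiv.Perm (Fin n)) (lam : Fin n → Fin n → ℝ)
    (hlam : ∀ i m, lam i m = τ (σ i m) i)
    (hmono : ∀ i, Monotone (lam i))
    (hself : ∀ i, σ i ⟨0, by omega⟩ = i ∧ lam i ⟨0, by omega⟩ = 0)
    (f : Fin n → Fin k)
    (hbij : ∀ i, Set.BijOn f (σ i '' {m : Fin n | (m : ℕ) < k}) Set.univ)
    (hold : Fin n → Fin k → Fin n)
    (hhold : ∀ i j, hold i j ∈ σ i '' {m : Fin n | (m : ℕ) < k} ∧ f (hold i j) = j) :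
    (1 / ((k : ℝ) * n)) * ∑ i, ∑ j, τ (hold i j) i =
      (1 / ((k : ℝ) * n)) *
        ∑ i, ∑ m ∈ Finset.univ.filter (fun m : Fin n => (m : ℕ) < k), lam i m := by
  congr 1
  refine Finset.sum_congr rfl fun i _ => ?_
  have hmem : ∀ j, hold i j ∈ (Finset.univ.filter (fun m : Fin n => (m : ℕ) < k)).image (σ i) := by
    intro j
    obtain ⟨⟨m, hm, hme⟩, -⟩ := hhold i j
    exact Finset.mem_image.2 ⟨m, Finset.mem_filter.2 ⟨Finset.mem_univ _, hm⟩, hme⟩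
  have key : ∑ j, τ (hold i j) i
      = ∑ v ∈ (Finset.univ.filter (fun m : Fin n => (m : ℕ) < k)).image (σ i), τ v i := by
    refine Finset.sum_bij (fun j _ => hold i j) (fun j _ => hmem j) ?_ ?_ (fun _ _ => rfl)
    · intro a _ b _ hab
      have := (hhold i a).2
      rw [hab, (hhold i b).2] at this
      exact this.symm
    · intro v hv
      have hvS : v ∈ σ i '' {m : Fin n | (m : ℕ) < k} := by
        obtain ⟨m, hm, hme⟩ := Finset.mem_image.1 hv
        exact ⟨m, (Finset.mem_filter.1 hm).2, hme⟩
      refine ⟨f v, Finset.mem_univ _, ?_⟩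
      show hold i (f v) = v
      exact (hbij i).injOn (hhold i (f v)).1 hvS (hhold i (f v)).2
  rw [key, Finset.sum_image (by intro a _ b _ h; exact (σ i).injective h)]
  exact Finset.sum_congr rfl fun m _ => (hlam i m).symm
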